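/- Let c ∈ ℝ, A ∈ ℝ, ψ : V → ℝ with A ≤ ψ_i for all i, and suppose u minimizes the functional I(f) = (1/2)·Σ_{{i,j}∈E} ω_{ij}(f_i − f_j)² + c·Σ_{i∈V} μ_i f_i − Σ_{i∈V} μ_i h_i e^{f_i} (first sum over unordered edges) over K = {f : V → ℝ : A ≤ f_i ≤ ψ_i for all i}, with A < u_i < ψ_i for every i. Then for every vertex i ∈ V one has Σ_{j∼i} ω_{ij} − μ_i h_i e^{u_i} ≥ 0; in particular, if h_i > 0 then e^{u_i} ≤ (Σ_{j∼i} ω_{ij}) / (μ_i h_i). -/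
import Mathlib


/-- The graph Laplacian: `(Δ f)_i = (1/μ_i) ∑_{j ∼ i} ω_{ij} (f_j - f_i)`. -/
noncomputable def glap {V : Type*} [Fintype V] (G : SimpleGraph V) [DecidableRel G.Adj]
    (μ : V → ℝ) (ω : V → V → ℝ) (f : V → ℝ) (i : V) : ℝ :=
  (1 / μ i) * ∑ j ∈ G.neighborFinset i, ω i j * (f j - f i)

/-- The functional `I(f) = (1/2) ∑_{{i,j} ∈ E} ω_{ij}(f_i - f_j)² + c ∑_i μ_i f_i
- ∑_i μ_i h_i e^{f_i}`.  Since `ω` is symmetric, the sum over unordered edges equals half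
the sum over ordered adjacent pairs, whence the factor `1/4` below. -/
noncomputable def kwEnergy {V : Type*} [Fintype V] (G : SimpleGraph V) [DecidableRel G.Adj]
    (μ : V → ℝ) (ω : V → V → ℝ) (c : ℝ) (h : V → ℝ) (f : V → ℝ) : ℝ :=
  (1 / 4) * ∑ i, ∑ j ∈ G.neighborFinset i, ω i j * (f i - f j) ^ 2
    + c * ∑ i, μ i * f i - ∑ i, μ i * h i * Real.exp (f i)

lemma cosh_ineq (t : ℝ) : t ^ 2 ≤ Real.exp t + Real.exp (-t) - 2 := by
  have key : ∀ s : ℝ, 0 ≤ s → s ^ 2 ≤ Real.exp s + Real.exp (-s) - 2 := by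
    intro s hs
    have h1 : s / 2 ≤ Real.sinh (s / 2) := by
      rcases eq_or_lt_of_le hs with h | h
      · simp [← h]
      · exact (Real.self_lt_sinh_iff.mpr (by linarith)).le
    have h2 : s ≤ Real.exp (s / 2) - Real.exp (-(s / 2)) := by
      rw [Real.sinh_eq] at h1; linarith
    have h3 : Real.exp (s / 2) * Real.exp (s / 2) = Real.exp s := by
      rw [← Real.exp_add]; ring_nf
    have h4 : Real.exp (-(s / 2)) * Real.exp (-(s / 2)) = Real.exp (-s) := by
      rw [← Real.exp_add]; ring_nf
    have h5 : Real.exp (s / 2) * Real.exp (-(s / 2)) = 1 := by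
      rw [← Real.exp_add]; simp
    nlinarith [Real.exp_pos (s/2), Real.exp_pos (-(s/2))]
  rcases le_or_gt 0 t with h | h
  · exact key t h
  · have h1 := key (-t) (by linarith)
    rw [neg_neg] at h1
    have h2 : (-t) ^ 2 = t ^ 2 := by ring
    linarith

lemma kwEnergy_update {V : Type*} [Fintype V] [DecidableEq V] (G : SimpleGraph V)
    [DecidableRel G.Adj]
    (μ : V → ℝ) (ω : V → V → ℝ) (hsym : ∀ i j, ω i j = ω j i)
    (c : ℝ) (h : V → ℝ) (u : V → ℝ) (i : V) (t : ℝ) :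
    kwEnergy G μ ω c h (Function.update u i (u i + t)) =
      kwEnergy G μ ω c h u
      + (t * ∑ j ∈ G.neighborFinset i, ω i j * (u i - u j)
        + t ^ 2 / 2 * ∑ j ∈ G.neighborFinset i, ω i j
        + c * μ i * t
        - μ i * h i * (Real.exp (u i + t) - Real.exp (u i))) := by
  set f := Function.update u i (u i + t) with hf
  have hfi : f i = u i + t := Function.update_self i _ u
  have hfj : ∀ j, j ≠ i → f j = u j := fun j hj => Function.update_of_ne hj _ u
  set X : ℝ := ∑ j ∈ G.neighborFinset i, ω i j * ((u i - u j + t) ^ 2 - (u i - u j) ^ 2) with hX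
  -- quadratic part
  have hQ : ∑ k, ∑ j ∈ G.neighborFinset k, ω k j * (f k - f j) ^ 2
      = (∑ k, ∑ j ∈ G.neighborFinset k, ω k j * (u k - u j) ^ 2) + 2 * X := by
    have inner : ∀ k, ∑ j ∈ G.neighborFinset k, ω k j * (f k - f j) ^ 2
        = ∑ j ∈ G.neighborFinset k, ω k j * (u k - u j) ^ 2
          + (if k = i then X
             else if k ∈ G.neighborFinset i then
               ω i k * ((u i - u k + t) ^ 2 - (u i - u k) ^ 2) else 0) := by
      intro k
      by_cases hk : k = i
      · subst hk
        rw [if_pos rfl, ← Finset.sum_add_distrib]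
        refine Finset.sum_congr rfl fun j hj => ?_
        have hji : j ≠ k := fun hji => (G.notMem_neighborFinset_self k) (hji ▸ hj)
        rw [hfi, hfj j hji]; ring
      · rw [if_neg hk]
        have hfk : f k = u k := hfj k hk
        have step : ∑ j ∈ G.neighborFinset k, ω k j * (f k - f j) ^ 2
            = ∑ j ∈ G.neighborFinset k, (ω k j * (u k - u j) ^ 2
                + ω k j * ((u k - f j) ^ 2 - (u k - u j) ^ 2)) := by
          refine Finset.sum_congr rfl fun j _ => ?_
          rw [hfk]; ring
        rw [step, Finset.sum_add_distrib]
        congr 1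
        by_cases hik : i ∈ G.neighborFinset k
        · have hki : k ∈ G.neighborFinset i := by
            rw [SimpleGraph.mem_neighborFinset] at *
            exact hik.symm
          rw [if_pos hki]
          rw [Finset.sum_eq_single_of_mem i hik
            (fun b _ hb => by rw [hfj b hb]; ring)]
          rw [hfi, hsym k i]; ring
        · have hki : k ∉ G.neighborFinset i := by
            rw [SimpleGraph.mem_neighborFinset] at *
            exact fun hc => hik hc.symm
          rw [if_neg hki]
          exact Finset.sum_eq_zero fun j hj => by
            have : j ≠ i := fun hji => hik (hji ▸ hj)
            rw [hfj j this]; ring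
    calc ∑ k, ∑ j ∈ G.neighborFinset k, ω k j * (f k - f j) ^ 2
        = ∑ k, (∑ j ∈ G.neighborFinset k, ω k j * (u k - u j) ^ 2
          + (if k = i then X
             else if k ∈ G.neighborFinset i then
               ω i k * ((u i - u k + t) ^ 2 - (u i - u k) ^ 2) else 0)) :=
          Finset.sum_congr rfl fun k _ => inner k
      _ = (∑ k, ∑ j ∈ G.neighborFinset k, ω k j * (u k - u j) ^ 2) + 2 * X := by
          rw [Finset.sum_add_distrib]
          congr 1
          have hsplit : ∑ k : V, (if k = i then X
              else if k ∈ G.neighborFinset i then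
                ω i k * ((u i - u k + t) ^ 2 - (u i - u k) ^ 2) else 0)
              = X + ∑ k ∈ Finset.univ.erase i,
                (if k ∈ G.neighborFinset i then
                  ω i k * ((u i - u k + t) ^ 2 - (u i - u k) ^ 2) else 0) := by
            rw [← Finset.add_sum_erase _ _ (Finset.mem_univ i), if_pos rfl]
            congr 1
            exact Finset.sum_congr rfl fun k hk =>
              if_neg (Finset.ne_of_mem_erase hk)
          rw [hsplit]
          have heq : ∑ k ∈ Finset.univ.erase i,
              (if k ∈ G.neighborFinset i then
                ω i k * ((u i - u k + t) ^ 2 - (u i - u k) ^ 2) else 0)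
              = ∑ k ∈ G.neighborFinset i,
                ω i k * ((u i - u k + t) ^ 2 - (u i - u k) ^ 2) := by
            rw [Finset.sum_ite_mem]
            congr 1
            ext k
            simp only [Finset.mem_inter, Finset.mem_erase, Finset.mem_univ, true_and,
              SimpleGraph.mem_neighborFinset, and_iff_right_iff_imp]
            exact fun hadj => ⟨(G.ne_of_adj hadj).symm, trivial⟩
          rw [heq, hX]; ring
  -- linear part
  have hL : ∑ k, μ k * f k = (∑ k, μ k * u k) + μ i * t := by
    have key : ∑ k, (μ k * f k - μ k * u k) = μ i * t := by
      rw [Finset.sum_eq_single_of_mem i (Finset.mem_univ i)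
        (fun b _ hb => by rw [hfj b hb]; ring)]
      rw [hfi]; ring
    rw [Finset.sum_sub_distrib] at key
    linarith
  -- exp part
  have hE : ∑ k, μ k * h k * Real.exp (f k)
      = (∑ k, μ k * h k * Real.exp (u k)) + μ i * h i * (Real.exp (u i + t) - Real.exp (u i)) := by
    have key : ∑ k, (μ k * h k * Real.exp (f k) - μ k * h k * Real.exp (u k))
        = μ i * h i * (Real.exp (u i + t) - Real.exp (u i)) := by
      rw [Finset.sum_eq_single_of_mem i (Finset.mem_univ i)
        (fun b _ hb => by rw [hfj b hb]; ring)]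
      rw [hfi]; ring
    rw [Finset.sum_sub_distrib] at key
    linarith
  have hX2 : X = 2 * t * (∑ j ∈ G.neighborFinset i, ω i j * (u i - u j))
      + t ^ 2 * ∑ j ∈ G.neighborFinset i, ω i j := by
    rw [hX, Finset.mul_sum, Finset.mul_sum, ← Finset.sum_add_distrib]
    exact Finset.sum_congr rfl fun j _ => by ring
  unfold kwEnergy
  rw [hQ, hL, hE, hX2]
  ring

/-- If `u` minimizes the functional `I` over `K = {f : A ≤ f ≤ ψ}`, with `A < u_i < ψ_i`
for every `i`, then `∑_{j∼i} ω_{ij} - μ_i h_i e^{u_i} ≥ 0` for every vertex `i`; in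
particular, if `h_i > 0` then `e^{u_i} ≤ (∑_{j∼i} ω_{ij}) / (μ_i h_i)`. -/
theorem stmt_14 {V : Type*} [Fintype V] (G : SimpleGraph V) [DecidableRel G.Adj]
    (hconn : G.Connected)
    (μ : V → ℝ) (hμ : ∀ i, 0 < μ i)
    (ω : V → V → ℝ) (hsym : ∀ i j, ω i j = ω j i)
    (hω : ∀ i j, G.Adj i j → 0 < ω i j)
    (h : V → ℝ) (c : ℝ) (A : ℝ) (ψ : V → ℝ)
    (hAψ : ∀ i, A ≤ ψ i)
    (u : V → ℝ)
    (huK : ∀ i, A ≤ u i ∧ u i ≤ ψ i)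
    (hmin : ∀ f : V → ℝ, (∀ i, A ≤ f i ∧ f i ≤ ψ i) →
      kwEnergy G μ ω c h u ≤ kwEnergy G μ ω c h f)
    (hint : ∀ i, A < u i ∧ u i < ψ i) :
    ∀ i, (∑ j ∈ G.neighborFinset i, ω i j) - μ i * h i * Real.exp (u i) ≥ 0 ∧
      (0 < h i → Real.exp (u i) ≤ (∑ j ∈ G.neighborFinset i, ω i j) / (μ i * h i)) := by
  classical
  intro i
  set S := ∑ j ∈ G.neighborFinset i, ω i j with hS
  have hS0 : 0 ≤ S :=
    Finset.sum_nonneg fun j hj => (hω i j ((G.mem_neighborFinset i j).mp hj)).le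
  set B := ∑ j ∈ G.neighborFinset i, ω i j * (u i - u j) with hB
  set t := min (ψ i - u i) (u i - A) with ht
  have ht0 : 0 < t := lt_min (by linarith [(hint i).2]) (by linarith [(hint i).1])
  have hmem : ∀ s : ℝ, |s| ≤ t →
      ∀ j, A ≤ Function.update u i (u i + s) j ∧ Function.update u i (u i + s) j ≤ ψ j := by
    intro s hs j
    obtain ⟨hs1, hs2⟩ := abs_le.mp hs
    have h1 : t ≤ ψ i - u i := min_le_left _ _
    have h2 : t ≤ u i - A := min_le_right _ _
    by_cases hj : j = i
    · subst hj
      rw [Function.update_self]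
      constructor <;> linarith
    · rw [Function.update_of_ne hj]
      exact huK j
  have key : ∀ s : ℝ, |s| ≤ t →
      0 ≤ s * B + s ^ 2 / 2 * S + c * μ i * s
        - μ i * h i * (Real.exp (u i + s) - Real.exp (u i)) := by
    intro s hs
    have := hmin _ (hmem s hs)
    rw [kwEnergy_update G μ ω hsym c h u i s] at this
    linarith
  have h1 := key t (by rw [abs_of_pos ht0])
  have h2 := key (-t) (by rw [abs_neg, abs_of_pos ht0])
  rw [Real.exp_add] at h1 h2
  have hsum : μ i * h i * Real.exp (u i) * (Real.exp t + Real.exp (-t) - 2)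
      ≤ t ^ 2 * S := by nlinarith
  set m := μ i * h i * Real.exp (u i) with hm
  have hcosh : t ^ 2 ≤ Real.exp t + Real.exp (-t) - 2 := cosh_ineq t
  have main : S - m ≥ 0 := by
    rcases le_or_gt m 0 with hm0 | hm0
    · linarith
    · have := mul_le_mul_of_nonneg_left hcosh hm0.le
      nlinarith [pow_pos ht0 2]
  refine ⟨main, fun hhi => ?_⟩
  have hmu : 0 < μ i * h i := mul_pos (hμ i) hhi
  rw [le_div_iff₀ hmu]
  nlinarith
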